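/- arXiv:2009.02323 — 2 statements merged into one kernel-verified Lean document; each statement's English description precedes it below -/
import Mathlib

section
/- There exists an absolute constant C > 0 such that for all (ℓ,m) ∈ I and all x ∈ [−1,1], one has Y_{ℓ,m}(x)² ≤ C (1−x²)^m (ℓ/(m+1)^{1/2}) · binom(ℓ−1/2+m, 2m), where ℓ−1/2+m and 2m are natural numbers since (ℓ,m) ∈ I. -/
open Real Set

/-- Jacobi polynomial `P_j^{(α,α)}` via Rodrigues' formula. -/
noncomputable def jacobiP (j : ℕ) (α : ℝ) (x : ℝ) : ℝ :=
  ((-1 : ℝ) ^ j / (2 ^ j * (Nat.factorial j : ℝ))) * (1 - x ^ 2) ^ (-α) *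
    iteratedDeriv j (fun t : ℝ => (1 - t ^ 2) ^ (α + (j : ℝ))) x

/-- The normalization constant `c_{ℓm}`. -/
noncomputable def cConst (ℓ m : ℝ) : ℝ :=
  Real.sqrt (ℓ * Real.Gamma (ℓ - m + 1/2) * Real.Gamma (ℓ + m + 1/2)) /
    ((2 : ℝ) ^ m * Real.Gamma (ℓ + 1/2))

/-- The function `Y_{ℓ,m}`. -/
noncomputable def Yfun (ℓ m x : ℝ) : ℝ :=
  cConst ℓ m * (1 - x ^ 2) ^ (m / 2) * jacobiP ⌊ℓ - m - 1/2⌋₊ m x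

/-- Membership in the index set `I = {(ℓ,m) ∈ (ℕ/2)² : ℓ - m - 1/2 ∈ ℕ}`. -/
def memI (ℓ m : ℝ) : Prop :=
  (∃ n : ℕ, m = (n : ℝ) / 2) ∧ (∃ j : ℕ, ℓ - m - 1/2 = (j : ℝ))

/-- `b_{ℓ,m} = m / ℓ`. -/
noncomputable def bPt (ℓ m : ℝ) : ℝ := m / ℓ

/-- `a_{ℓ,m} = (1 - b_{ℓ,m}²)^{1/2}`. -/
noncomputable def aPt (ℓ m : ℝ) : ℝ := Real.sqrt (1 - bPt ℓ m ^ 2)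

/-- Membership in `ℕ_k = ℕ + (k-1)/2`. -/
def memNk (k : ℕ) (t : ℝ) : Prop := ∃ n : ℕ, t = (n : ℝ) + ((k : ℝ) - 1) / 2

/-- Membership in `I_d`. -/
def memId (d : ℕ) (ℓ m : ℝ) : Prop := memNk d ℓ ∧ memNk (d - 1) m ∧ m ≤ ℓ

/-- The function `X̃^d_{ℓ,m}`. -/
noncomputable def Xtilde (d : ℕ) (ℓ m x : ℝ) : ℝ :=
  (1 - x ^ 2) ^ (-((d : ℝ) - 2) / 4) * Yfun ℓ m x


/-!
On `(-1, 1)`, Leibniz's rule applied to `(1 - x²)^s = (1 - x)^s (1 + x)^s` turns Rodrigues' formula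
into the closed form `P_j^{(α,α)}(x) = ∑_{i+k=j} C(s,i) C(s,k) ((x+1)/2)^i ((x-1)/2)^k` with
`s = α + j`, where `C(s, i)` is the binomial coefficient with real upper argument. For fixed `s`
these sums `Q_r` satisfy `Q_{r+1}' = (2s - r)/2 · Q_r` and a three-term relation, which make the
derivative of Sonine's function `(r + 2)(2s - r - 1) Q_{r+2}² + (1 - x²) Q_{r+2}'²` have the sign
of `x` as soon as `α ≥ -1/2`. So `|P_j^{(α,α)}|` is largest at `±1`, where it equals `C(α + j, j)`.

With `n = 2m` and `ℓ = m + j + 1/2` one computes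
`c_{ℓm}² C(m + j, j)² = ℓ (j+n)! / (2ⁿ Γ(m+1)² j!)`. Legendre's duplication formula writes `n!`
through `Γ(m + 1/2) Γ(m + 1)`, and log-convexity of `Γ` gives `√(m + 1) Γ(m + 1/2) ≤ 2 Γ(m + 1)`;
hence `C = 2/√π` works.
-/

open Finset Polynomial Topology
open scoped Nat

lemma descPochhammer_eval_eq_factorial_mul_choose (s : ℝ) (k : ℕ) :
    (descPochhammer ℝ k).eval s = k ! * Ring.choose s k := by
  rw [← nsmul_eq_mul, ← Ring.descPochhammer_eq_factorial_smul_choose,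
    ← descPochhammer_map (algebraMap ℤ ℝ), eval_map_algebraMap, aeval_eq_smeval]

lemma succ_mul_choose_succ (s : ℝ) (k : ℕ) :
    (k + 1) * Ring.choose s (k + 1) = (s - k) * Ring.choose s k := by
  have h := descPochhammer_succ_eval k s
  rw [descPochhammer_eval_eq_factorial_mul_choose, descPochhammer_eval_eq_factorial_mul_choose,
    Nat.factorial_succ] at h
  apply mul_left_cancel₀ (Nat.cast_ne_zero.mpr k.factorial_ne_zero)
  push_cast at h
  linear_combination h

lemma Gamma_mul_descPochhammer_eval {α : ℝ} (hα : -1 < α) (j : ℕ) :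
    Gamma (α + 1) * (descPochhammer ℝ j).eval (α + j) = Gamma (α + j + 1) := by
  induction j with
  | zero => simp
  | succ j ih =>
    have hpos : α + j + 1 ≠ 0 := by linarith [(j.cast_nonneg : (0 : ℝ) ≤ j)]
    rw [descPochhammer_succ_left, eval_mul, eval_comp, eval_X, eval_sub, eval_X, eval_one,
      Nat.cast_succ, show α + (j + 1) - 1 = α + j by ring, ← add_assoc, Gamma_add_one hpos,
      ← ih]
    ring

lemma Gamma_mul_choose_mul_factorial {α : ℝ} (hα : -1 < α) (j : ℕ) :
    Gamma (α + 1) * Ring.choose (α + j) j * j ! = Gamma (α + j + 1) := by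
  rw [← Gamma_mul_descPochhammer_eval hα, descPochhammer_eval_eq_factorial_mul_choose]
  ring

lemma sqrt_add_one_mul_Gamma_add_half_le {m : ℝ} (hm : 0 ≤ m) :
    √(m + 1) * Gamma (m + 1 / 2) ≤ 2 * Gamma (m + 1) := by
  have hG₁ : 0 < Gamma (m + 1) := Gamma_pos_of_pos (by linarith)
  have hG₂ : 0 < Gamma (m + 2) := Gamma_pos_of_pos (by linarith)
  have hconv : Gamma (m + 3 / 2) ≤ √(Gamma (m + 1) * Gamma (m + 2)) := by
    have h := Gamma_mul_add_mul_le_rpow_Gamma_mul_rpow_Gamma (s := m + 1) (t := m + 2)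
      (by linarith) (by linarith) one_half_pos one_half_pos (by norm_num)
    rw [sqrt_eq_rpow, mul_rpow hG₁.le hG₂.le]
    convert h using 2
    ring
  have hsq : (m + 1 / 2) ^ 2 * Gamma (m + 1 / 2) ^ 2 ≤ (m + 1) * Gamma (m + 1) ^ 2 := by
    have h32 : Gamma (m + 3 / 2) = (m + 1 / 2) * Gamma (m + 1 / 2) := by
      rw [show m + 3 / 2 = m + 1 / 2 + 1 by ring, Gamma_add_one (by linarith)]
    have h2 : Gamma (m + 2) = (m + 1) * Gamma (m + 1) := by
      rw [show m + 2 = m + 1 + 1 by ring, Gamma_add_one (by linarith)]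
    have := pow_le_pow_left₀ (by positivity) hconv 2
    rw [sq_sqrt (by positivity), h32, h2] at this
    linarith
  refine (pow_le_pow_iff_left₀ (by positivity) (by positivity) two_ne_zero).mp ?_
  rw [mul_pow, mul_pow, sq_sqrt (by linarith)]
  have hhalf : 0 < (m + 1 / 2) ^ 2 := by positivity
  refine le_of_mul_le_mul_left ?_ hhalf
  calc (m + 1 / 2) ^ 2 * ((m + 1) * Gamma (m + 1 / 2) ^ 2)
      = (m + 1) * ((m + 1 / 2) ^ 2 * Gamma (m + 1 / 2) ^ 2) := by ring
    _ ≤ (m + 1) * ((m + 1) * Gamma (m + 1) ^ 2) := by gcongr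
    _ ≤ (m + 1 / 2) ^ 2 * (2 ^ 2 * Gamma (m + 1) ^ 2) := by
      have h : (m + 1) * (m + 1) ≤ (m + 1 / 2) ^ 2 * 2 ^ 2 := by nlinarith
      nlinarith [mul_le_mul_of_nonneg_right h (sq_nonneg (Gamma (m + 1)))]

lemma sqrt_pi_mul_Gamma_two_mul_add_one (m : ℝ) :
    √π * Gamma (2 * m + 1) = 2 ^ (2 * m) * Gamma (m + 1 / 2) * Gamma (m + 1) := by
  have h := Gamma_mul_Gamma_add_half (m + 1 / 2)
  rw [show m + 1 / 2 + 1 / 2 = m + 1 by ring, show 2 * (m + 1 / 2) = 2 * m + 1 by ring,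
    show 1 - (2 * m + 1) = -(2 * m) by ring, rpow_neg zero_le_two] at h
  rw [mul_assoc, h]
  field_simp

lemma sqrt_pi_mul_factorial (n : ℕ) :
    √π * n ! = 2 ^ n * Gamma (n / 2 + 1 / 2) * Gamma (n / 2 + 1) := by
  have h := sqrt_pi_mul_Gamma_two_mul_add_one (n / 2)
  rwa [show 2 * ((n : ℝ) / 2) = n by ring, Gamma_nat_eq_factorial, rpow_natCast] at h

lemma sqrt_pi_mul_sqrt_mul_factorial_le (n : ℕ) :
    √π * √(n / 2 + 1) * n ! ≤ 2 * 2 ^ n * Gamma (n / 2 + 1) ^ 2 := by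
  have h := sqrt_add_one_mul_Gamma_add_half_le (m := n / 2) (by positivity)
  calc √π * √(n / 2 + 1) * n !
      = 2 ^ n * Gamma (n / 2 + 1) * (√(n / 2 + 1) * Gamma (n / 2 + 1 / 2)) := by
        rw [mul_right_comm, sqrt_pi_mul_factorial]; ring
    _ ≤ 2 ^ n * Gamma (n / 2 + 1) * (2 * Gamma (n / 2 + 1)) := by gcongr
    _ = 2 * 2 ^ n * Gamma (n / 2 + 1) ^ 2 := by ring

lemma cConst_sq_mul_choose_sq (n j : ℕ) :
    cConst (n / 2 + j + 1 / 2) (n / 2) ^ 2 * Ring.choose ((n : ℝ) / 2 + j) j ^ 2 =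
      (n / 2 + j + 1 / 2) * (j + n)! / (2 ^ n * Gamma (n / 2 + 1) ^ 2 * j !) := by
  have hα : (-1 : ℝ) < n / 2 := by linarith [show (0 : ℝ) ≤ n / 2 by positivity]
  have hchoose := Gamma_mul_choose_mul_factorial hα j
  have hΓj : 0 < Gamma ((n : ℝ) / 2 + j + 1) := Gamma_pos_of_pos (by positivity)
  have h1 : (n : ℝ) / 2 + j + 1 / 2 - n / 2 + 1 / 2 = (j : ℝ) + 1 := by ring
  have h2 : (n : ℝ) / 2 + j + 1 / 2 + n / 2 + 1 / 2 = ((j + n : ℕ) : ℝ) + 1 := by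
    push_cast; ring
  have h3 : (n : ℝ) / 2 + j + 1 / 2 + 1 / 2 = n / 2 + j + 1 := by ring
  have h4 : ((2 : ℝ) ^ ((n : ℝ) / 2)) ^ 2 = 2 ^ n := by
    rw [← rpow_natCast, ← rpow_mul zero_le_two]; norm_num
  rw [cConst, h1, h2, h3, Gamma_nat_eq_factorial, Gamma_nat_eq_factorial, div_pow, mul_pow,
    sq_sqrt (by positivity), h4, ← hchoose]
  generalize Ring.choose ((n : ℝ) / 2 + j) j = c at hchoose
  have hc : c ≠ 0 := by
    rintro rfl
    rw [mul_zero, zero_mul] at hchoose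
    exact hΓj.ne' hchoose.symm
  field_simp

lemma cConst_sq_mul_choose_sq_le (n j : ℕ) :
    cConst (n / 2 + j + 1 / 2) (n / 2) ^ 2 * Ring.choose ((n : ℝ) / 2 + j) j ^ 2 ≤
      2 / √π * ((n / 2 + j + 1 / 2) / √(n / 2 + 1)) * (j + n).choose n := by
  have hchoose : ((j + n).choose n : ℝ) * j ! * n ! = (j + n)! := by
    exact_mod_cast Nat.add_choose_mul_factorial_mul_factorial j n
  have hroot : 0 < √π * √((n : ℝ) / 2 + 1) := by positivity
  have hfact : (n ! : ℝ) ≤ 2 * 2 ^ n * Gamma (n / 2 + 1) ^ 2 / (√π * √(n / 2 + 1)) := by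
    rw [le_div_iff₀ hroot]
    linarith [sqrt_pi_mul_sqrt_mul_factorial_le n]
  rw [cConst_sq_mul_choose_sq, div_le_iff₀ (by positivity), ← hchoose]
  calc (n / 2 + j + 1 / 2) * ((j + n).choose n * j ! * n ! : ℝ)
      = (n / 2 + j + 1 / 2) * (j + n).choose n * j ! * n ! := by ring
    _ ≤ (n / 2 + j + 1 / 2) * (j + n).choose n * j ! *
          (2 * 2 ^ n * Gamma (n / 2 + 1) ^ 2 / (√π * √(n / 2 + 1))) := by gcongr
    _ = _ := by ring

/-- The Jacobi polynomial `P_r^{(s-r, s-r)}`, in closed form. -/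
noncomputable def jacobiClosedForm (s : ℝ) (r : ℕ) (x : ℝ) : ℝ :=
  ∑ p ∈ antidiagonal r,
    Ring.choose s p.1 * Ring.choose s p.2 * ((x + 1) / 2) ^ p.1 * ((x - 1) / 2) ^ p.2

lemma jacobiClosedForm_zero (s x : ℝ) : jacobiClosedForm s 0 x = 1 := by
  simp [jacobiClosedForm]

lemma jacobiClosedForm_one (s x : ℝ) : jacobiClosedForm s 1 x = s * x := by
  simp [jacobiClosedForm, Nat.sum_antidiagonal_succ]
  ring

lemma jacobiClosedForm_apply_one (s : ℝ) (r : ℕ) :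
    jacobiClosedForm s r 1 = Ring.choose s r := by
  rw [jacobiClosedForm, sum_eq_single (r, 0)]
  · simp
  · rintro ⟨i, k⟩ hp hne
    have hk : k ≠ 0 := by rintro rfl; simp_all
    simp [hk]
  · simp

lemma jacobiClosedForm_apply_neg_one (s : ℝ) (r : ℕ) :
    jacobiClosedForm s r (-1) = (-1) ^ r * Ring.choose s r := by
  rw [jacobiClosedForm, sum_eq_single (0, r)]
  · norm_num [Ring.choose_zero_right]
    ring
  · rintro ⟨i, k⟩ hp hne
    have hi : i ≠ 0 := by rintro rfl; simp_all
    simp [hi]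
  · simp

lemma hasDerivAt_jacobiClosedForm (s : ℝ) (r : ℕ) (x : ℝ) :
    HasDerivAt (jacobiClosedForm s (r + 1)) ((2 * s - r) / 2 * jacobiClosedForm s r x) x := by
  have hu : HasDerivAt (fun y : ℝ => (y + 1) / 2) (1 / 2) x := by
    simpa using ((hasDerivAt_id x).add_const 1).div_const 2
  have hv : HasDerivAt (fun y : ℝ => (y - 1) / 2) (1 / 2) x := by
    simpa using ((hasDerivAt_id x).sub_const 1).div_const 2
  refine (HasDerivAt.fun_sum fun p _ =>
    ((hu.fun_pow p.1).const_mul (Ring.choose s p.1 * Ring.choose s p.2)).fun_mul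
      (hv.fun_pow p.2)).congr_deriv ?_
  rw [sum_add_distrib, Nat.sum_antidiagonal_succ, Nat.sum_antidiagonal_succ' (n := r)]
  simp only [Nat.cast_zero, zero_mul, mul_zero, zero_add, Nat.add_sub_cancel,
    ← sum_add_distrib, jacobiClosedForm, mul_sum]
  refine sum_congr rfl fun p hp => ?_
  have hsum : (p.1 : ℝ) + p.2 = r := by exact_mod_cast (mem_antidiagonal.mp hp)
  push_cast
  linear_combination (((x + 1) / 2) ^ p.1 * ((x - 1) / 2) ^ p.2 / 2) *
    (Ring.choose s p.2 * succ_mul_choose_succ s p.1 +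
      Ring.choose s p.1 * succ_mul_choose_succ s p.2) -
    (Ring.choose s p.1 * Ring.choose s p.2 * ((x + 1) / 2) ^ p.1 * ((x - 1) / 2) ^ p.2 / 2) *
      hsum

lemma choose_mul_choose_three_term (s : ℝ) (i k : ℕ) :
    -(2 * s - (i + k)) * (Ring.choose s i * Ring.choose s k) +
        (i + k + 2) * (Ring.choose s (i + 1) * Ring.choose s (k + 1)) =
      (s - (i + k) - 1) *
        (Ring.choose s i * Ring.choose s (k + 1) + Ring.choose s (i + 1) * Ring.choose s k) := by
  have hi : (i : ℝ) + 1 ≠ 0 := by positivity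
  have hk : (k : ℝ) + 1 ≠ 0 := by positivity
  have h₁ : Ring.choose s (i + 1) = (s - i) * Ring.choose s i / (i + 1) := by
    rw [eq_div_iff hi, mul_comm]; exact succ_mul_choose_succ s i
  have h₂ : Ring.choose s (k + 1) = (s - k) * Ring.choose s k / (k + 1) := by
    rw [eq_div_iff hk, mul_comm]; exact succ_mul_choose_succ s k
  rw [h₁, h₂]
  field_simp
  ring

lemma jacobiClosedForm_three_term (s : ℝ) (r : ℕ) (x : ℝ) :
    (1 - x ^ 2) * ((2 * s - r) / 2 * jacobiClosedForm s r x) +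
        2 * (r + 2) * jacobiClosedForm s (r + 2) x =
      2 * (s - r - 1) * x * jacobiClosedForm s (r + 1) x := by
  let c := Ring.choose s
  let u := (x + 1) / 2
  let v := (x - 1) / 2
  have hQ2 : jacobiClosedForm s (r + 2) x = c 0 * c (r + 2) * (u ^ (r + 2) + v ^ (r + 2)) +
      ∑ p ∈ antidiagonal r, c (p.1 + 1) * c (p.2 + 1) * u ^ (p.1 + 1) * v ^ (p.2 + 1) := by
    rw [jacobiClosedForm, Nat.sum_antidiagonal_succ, Nat.sum_antidiagonal_succ']
    ring
  have hQ1 : x * jacobiClosedForm s (r + 1) x = c 0 * c (r + 1) * (u ^ (r + 2) + v ^ (r + 2)) +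
      ∑ p ∈ antidiagonal r,
        (c p.1 * c (p.2 + 1) + c (p.1 + 1) * c p.2) * u ^ (p.1 + 1) * v ^ (p.2 + 1) := by
    calc x * jacobiClosedForm s (r + 1) x
        = ∑ p ∈ antidiagonal (r + 1), u * (c p.1 * c p.2 * u ^ p.1 * v ^ p.2) +
            ∑ p ∈ antidiagonal (r + 1), v * (c p.1 * c p.2 * u ^ p.1 * v ^ p.2) := by
          rw [jacobiClosedForm, mul_sum, ← sum_add_distrib]
          exact sum_congr rfl fun p _ => by ring
      _ = _ := by
          rw [Nat.sum_antidiagonal_succ', Nat.sum_antidiagonal_succ, add_add_add_comm,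
            ← sum_add_distrib]
          congr 1
          · ring
          · exact sum_congr rfl fun p _ => by ring
  have hQ0 : (1 - x ^ 2) * jacobiClosedForm s r x =
      -4 * ∑ p ∈ antidiagonal r, c p.1 * c p.2 * u ^ (p.1 + 1) * v ^ (p.2 + 1) := by
    rw [jacobiClosedForm, mul_sum, mul_sum]
    exact sum_congr rfl fun p _ => by ring
  have hinterior :
      -2 * (2 * s - r) * ∑ p ∈ antidiagonal r, c p.1 * c p.2 * u ^ (p.1 + 1) * v ^ (p.2 + 1) +
        2 * (r + 2) *
          ∑ p ∈ antidiagonal r, c (p.1 + 1) * c (p.2 + 1) * u ^ (p.1 + 1) * v ^ (p.2 + 1) =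
      2 * (s - r - 1) * ∑ p ∈ antidiagonal r,
        (c p.1 * c (p.2 + 1) + c (p.1 + 1) * c p.2) * u ^ (p.1 + 1) * v ^ (p.2 + 1) := by
    rw [mul_sum, mul_sum, mul_sum, ← sum_add_distrib]
    refine sum_congr rfl fun p hp => ?_
    have hr : ((p.1 + p.2 : ℕ) : ℝ) = r := by rw [mem_antidiagonal.mp hp]
    push_cast at hr
    rw [← hr]
    linear_combination
      (2 * u ^ (p.1 + 1) * v ^ (p.2 + 1)) * choose_mul_choose_three_term s p.1 p.2
  have hboundary : ((r : ℝ) + 2) * c (r + 2) = (s - r - 1) * c (r + 1) := by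
    have h := succ_mul_choose_succ s (r + 1)
    push_cast at h
    linear_combination h
  linear_combination (2 * s - r) / 2 * hQ0 + 2 * (r + 2) * hQ2 - 2 * (s - r - 1) * hQ1 +
    hinterior + 2 * c 0 * (u ^ (r + 2) + v ^ (r + 2)) * hboundary

lemma le_max_of_forall_mul_deriv_nonneg {g g' : ℝ → ℝ} (hg : ∀ y, HasDerivAt g (g' y) y)
    (hg' : ∀ y, 0 ≤ y * g' y) {a b x : ℝ} (hx : x ∈ Icc a b) : g x ≤ max (g a) (g b) := by
  have hdiff : Differentiable ℝ g := fun y => (hg y).differentiableAt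
  rcases le_total 0 x with h0 | h0
  · have hmono : MonotoneOn g (Ici 0) := by
      refine monotoneOn_of_deriv_nonneg (convex_Ici 0) hdiff.continuous.continuousOn
        hdiff.differentiableOn fun y hy => ?_
      rw [interior_Ici] at hy
      rw [(hg y).deriv]
      exact nonneg_of_mul_nonneg_right (hg' y) hy
    exact (hmono h0 (h0.trans hx.2) hx.2).trans (le_max_right _ _)
  · have hanti : AntitoneOn g (Iic 0) := by
      refine antitoneOn_of_deriv_nonpos (convex_Iic 0) hdiff.continuous.continuousOn
        hdiff.differentiableOn fun y hy => ?_
      rw [interior_Iic] at hy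
      rw [(hg y).deriv]
      exact nonpos_of_mul_nonneg_right (hg' y) hy
    exact (hanti (hx.1.trans h0) h0 hx.1).trans (le_max_left _ _)

lemma hasDerivAt_jacobiClosedForm_energy (s : ℝ) (r : ℕ) (y : ℝ) :
    HasDerivAt (fun y => (r + 2) * (2 * s - r - 1) * jacobiClosedForm s (r + 2) y ^ 2 +
        (1 - y ^ 2) * ((2 * s - r - 1) / 2) ^ 2 * jacobiClosedForm s (r + 1) y ^ 2)
      ((4 * s - 4 * r - 6) * y * ((2 * s - r - 1) / 2) ^ 2 * jacobiClosedForm s (r + 1) y ^ 2)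
      y := by
  have hQ₂ := hasDerivAt_jacobiClosedForm s (r + 1) y
  have hQ₁ := hasDerivAt_jacobiClosedForm s r y
  have hw : HasDerivAt (fun y : ℝ => 1 - y ^ 2) (-(2 * y)) y := by
    simpa using (hasDerivAt_pow 2 y).const_sub 1
  refine (((hQ₂.fun_pow 2).const_mul _).add
    ((hw.mul_const _).mul (hQ₁.fun_pow 2))).congr_deriv ?_
  push_cast
  linear_combination (2 * jacobiClosedForm s (r + 1) y * ((2 * s - r - 1) / 2) ^ 2) *
    jacobiClosedForm_three_term s r y

theorem sq_jacobiClosedForm_le {s : ℝ} {d : ℕ} (hs : (d : ℝ) - 1 / 2 ≤ s) {x : ℝ}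
    (hx : x ∈ Set.Icc (-1) 1) : jacobiClosedForm s d x ^ 2 ≤ Ring.choose s d ^ 2 := by
  have hx2 : x ^ 2 ≤ 1 := by nlinarith [hx.1, hx.2]
  match d, hs with
  | 0, _ => simp [jacobiClosedForm_zero]
  | 1, _ =>
    rw [jacobiClosedForm_one, Ring.choose_one_right, mul_pow]
    exact mul_le_of_le_one_right (sq_nonneg s) hx2
  | r + 2, hs =>
    push_cast at hs
    have hcoef : 0 < ((r : ℝ) + 2) * (2 * s - r - 1) := by
      have : (0 : ℝ) ≤ r := r.cast_nonneg
      apply mul_pos <;> linarith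
    have henergy := le_max_of_forall_mul_deriv_nonneg (hasDerivAt_jacobiClosedForm_energy s r)
      (fun y => by
        have : 0 ≤ 4 * s - 4 * r - 6 := by linarith
        have := mul_nonneg this (mul_nonneg (sq_nonneg y)
          (sq_nonneg (((2 * s - r - 1) / 2) * jacobiClosedForm s (r + 1) y)))
        linarith) hx
    have hsign : ((-1 : ℝ) ^ (r + 2)) ^ 2 = 1 := by
      rw [← pow_mul, pow_mul', neg_one_sq, one_pow]
    rw [jacobiClosedForm_apply_one, jacobiClosedForm_apply_neg_one, mul_pow, hsign] at henergy
    norm_num at henergy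
    have hrest :
        0 ≤ (1 - x ^ 2) * ((2 * s - r - 1) / 2) ^ 2 * jacobiClosedForm s (r + 1) x ^ 2 := by
      have : 0 ≤ 1 - x ^ 2 := by linarith
      positivity
    refine le_of_mul_le_mul_left ?_ hcoef
    linarith

lemma iteratedDeriv_one_add_rpow (s x : ℝ) (k : ℕ) :
    iteratedDeriv k (fun t => (1 + t) ^ s) x =
      (descPochhammer ℝ k).eval s * (1 + x) ^ (s - k) := by
  rw [iteratedDeriv_comp_const_add k (fun t => t ^ s) 1, iteratedDeriv_eq_iterate]
  exact iter_deriv_rpow_const s (1 + x) k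

lemma iteratedDeriv_one_sub_rpow (s x : ℝ) (k : ℕ) :
    iteratedDeriv k (fun t => (1 - t) ^ s) x =
      (-1) ^ k * (descPochhammer ℝ k).eval s * (1 - x) ^ (s - k) := by
  rw [iteratedDeriv_comp_const_sub k (fun t => t ^ s) 1, iteratedDeriv_eq_iterate]
  dsimp only
  rw [iter_deriv_rpow_const, smul_eq_mul, mul_assoc]

lemma iteratedDeriv_one_sub_sq_rpow {s x : ℝ} (hx : x ∈ Set.Ioo (-1) 1) (j : ℕ) :
    iteratedDeriv j (fun t => (1 - t ^ 2) ^ s) x = j ! * ∑ p ∈ antidiagonal j,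
      (-1) ^ p.1 * Ring.choose s p.1 * Ring.choose s p.2 *
        (1 - x) ^ (s - p.1) * (1 + x) ^ (s - p.2) := by
  have hsplit : (fun t => (1 - t ^ 2) ^ s) =ᶠ[𝓝 x] fun t => (1 - t) ^ s * (1 + t) ^ s := by
    filter_upwards [isOpen_Ioo.mem_nhds hx] with t ht
    rw [← mul_rpow (by linarith [ht.2]) (by linarith [ht.1])]
    ring_nf
  have h₁ : ContDiffAt ℝ j (fun t : ℝ => (1 - t) ^ s) x :=
    (contDiffAt_const.sub contDiffAt_id).rpow_const_of_ne (by simp; linarith [hx.2])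
  have h₂ : ContDiffAt ℝ j (fun t : ℝ => (1 + t) ^ s) x :=
    (contDiffAt_const.add contDiffAt_id).rpow_const_of_ne (by simp; linarith [hx.1])
  rw [hsplit.iteratedDeriv_eq, iteratedDeriv_fun_mul h₁ h₂,
    Nat.sum_antidiagonal_eq_sum_range_succ_mk, mul_sum]
  refine sum_congr rfl fun i hi => ?_
  obtain ⟨k, rfl⟩ := Nat.exists_eq_add_of_le (Nat.lt_succ_iff.mp (mem_range.mp hi))
  have hfact : ((i + k).choose i : ℝ) * i ! * k ! = (i + k)! := by
    rw [Nat.choose_symm_add]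
    exact_mod_cast Nat.add_choose_mul_factorial_mul_factorial i k
  rw [Nat.add_sub_cancel_left, iteratedDeriv_one_sub_rpow, iteratedDeriv_one_add_rpow,
    descPochhammer_eval_eq_factorial_mul_choose, descPochhammer_eval_eq_factorial_mul_choose,
    ← hfact]
  ring

lemma rpow_neg_mul_rpow_add_natCast {y : ℝ} (hy : 0 < y) (α : ℝ) (n : ℕ) :
    y ^ (-α) * y ^ (α + n) = y ^ n := by
  rw [← rpow_add hy, neg_add_cancel_left, rpow_natCast]

theorem jacobiP_eq_jacobiClosedForm {α x : ℝ} (j : ℕ) (hx : x ∈ Set.Ioo (-1) 1) :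
    jacobiP j α x = jacobiClosedForm (α + j) j x := by
  have h₁ : 0 < 1 - x := by linarith [hx.2]
  have h₂ : 0 < 1 + x := by linarith [hx.1]
  rw [jacobiP, iteratedDeriv_one_sub_sq_rpow hx, jacobiClosedForm, mul_sum, mul_sum]
  refine sum_congr rfl fun p hp => ?_
  obtain ⟨i, k⟩ := p
  obtain rfl : i + k = j := mem_antidiagonal.mp hp
  have hw : (1 - x ^ 2) ^ (-α) = (1 - x) ^ (-α) * (1 + x) ^ (-α) := by
    rw [← mul_rpow h₁.le h₂.le]; ring_nf
  have hsub : (1 - x) ^ (-α) * (1 - x) ^ (α + ((i + k : ℕ) : ℝ) - i) = (1 - x) ^ k := by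
    rw [← rpow_neg_mul_rpow_add_natCast h₁ α k]; push_cast; ring_nf
  have hadd : (1 + x) ^ (-α) * (1 + x) ^ (α + ((i + k : ℕ) : ℝ) - k) = (1 + x) ^ i := by
    rw [← rpow_neg_mul_rpow_add_natCast h₂ α i]; push_cast; ring_nf
  have hsign : (-1 : ℝ) ^ (i + k) * (-1) ^ i = (-1) ^ k := by
    rw [pow_add, mul_right_comm, ← pow_add, ← two_mul, pow_mul, neg_one_sq, one_pow, one_mul]
  have hu : ((x + 1) / 2) ^ i = (1 + x) ^ i / 2 ^ i := by rw [← div_pow]; ring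
  have hv : ((x - 1) / 2) ^ k = (-1) ^ k * (1 - x) ^ k / 2 ^ k := by
    rw [← mul_pow, ← div_pow]; ring
  rw [hw]
  calc _ = ((-1 : ℝ) ^ (i + k) * (-1) ^ i) / 2 ^ (i + k) * Ring.choose (α + ↑(i + k)) i *
        Ring.choose (α + ↑(i + k)) k *
        ((1 - x) ^ (-α) * (1 - x) ^ (α + ((i + k : ℕ) : ℝ) - i)) *
        ((1 + x) ^ (-α) * (1 + x) ^ (α + ((i + k : ℕ) : ℝ) - k)) := by
        field_simp
    _ = _ := by
        rw [hsign, hsub, hadd, hu, hv]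
        ring

lemma continuous_jacobiClosedForm (s : ℝ) (r : ℕ) : Continuous (jacobiClosedForm s r) := by
  unfold jacobiClosedForm
  fun_prop

lemma continuous_jacobiP_zero (j : ℕ) : Continuous (jacobiP j 0) := by
  have hpoly : (fun t : ℝ => (1 - t ^ 2) ^ ((0 : ℝ) + j)) = fun t => (1 - t ^ 2) ^ j := by
    simp
  have hsmooth : ContDiff ℝ j (fun t : ℝ => (1 - t ^ 2) ^ j) := by fun_prop
  unfold jacobiP
  simp only [neg_zero, rpow_zero, mul_one, hpoly]
  exact continuous_const.mul (hsmooth.continuous_iteratedDeriv j le_rfl)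

lemma jacobiP_zero_eqOn (j : ℕ) :
    Set.EqOn (jacobiP j 0) (jacobiClosedForm (0 + j) j) (Set.Icc (-1) 1) := by
  rw [← closure_Ioo (by norm_num : (-1 : ℝ) ≠ 1)]
  exact Set.EqOn.closure (fun x hx => jacobiP_eq_jacobiClosedForm j hx)
    (continuous_jacobiP_zero j) (continuous_jacobiClosedForm _ j)

lemma jacobiP_eq_zero_of_sq_eq_one {α x : ℝ} (j : ℕ) (hα : α ≠ 0) (hx : x ^ 2 = 1) :
    jacobiP j α x = 0 := by
  rw [jacobiP, hx, sub_self, zero_rpow (neg_ne_zero.mpr hα), mul_zero, zero_mul]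

theorem sq_jacobiP_le {α x : ℝ} (j : ℕ) (hα : -1 / 2 ≤ α) (hx : x ∈ Set.Icc (-1) 1) :
    jacobiP j α x ^ 2 ≤ Ring.choose (α + j) j ^ 2 := by
  have hbound := sq_jacobiClosedForm_le (s := α + j) (d := j) (by linarith) hx
  rcases eq_or_ne α 0 with rfl | hα₀
  · rwa [jacobiP_zero_eqOn j hx]
  by_cases hint : x ∈ Set.Ioo (-1) 1
  · rwa [jacobiP_eq_jacobiClosedForm j hint]
  have hx₁ : x ^ 2 = 1 := by
    simp only [Set.mem_Ioo, not_and_or, not_lt] at hint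
    rcases hint with h | h <;> nlinarith [hx.1, hx.2]
  rw [jacobiP_eq_zero_of_sq_eq_one j hα₀ hx₁, zero_pow two_ne_zero]
  positivity

lemma sq_Yfun (n j : ℕ) {x : ℝ} (hw : 0 ≤ 1 - x ^ 2) :
    Yfun (n / 2 + j + 1 / 2) (n / 2) x ^ 2 =
      (1 - x ^ 2) ^ ((n : ℝ) / 2) *
        (cConst (n / 2 + j + 1 / 2) (n / 2) ^ 2 * jacobiP j (n / 2) x ^ 2) := by
  have hdeg : ⌊(n : ℝ) / 2 + j + 1 / 2 - n / 2 - 1 / 2⌋₊ = j := by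
    rw [show (n : ℝ) / 2 + j + 1 / 2 - n / 2 - 1 / 2 = j by ring, Nat.floor_natCast]
  have hhalf : ((1 - x ^ 2) ^ ((n : ℝ) / 2 / 2)) ^ 2 = (1 - x ^ 2) ^ ((n : ℝ) / 2) := by
    rw [← rpow_natCast, ← rpow_mul hw]
    norm_num
  rw [Yfun, hdeg, mul_pow, mul_pow, hhalf]
  ring

theorem stmt4 :
    ∃ C : ℝ, 0 < C ∧ ∀ ℓ m : ℝ, memI ℓ m → ∀ x ∈ Set.Icc (-1:ℝ) 1,
      Yfun ℓ m x ^ 2 ≤ C * (1 - x ^ 2) ^ m * (ℓ / Real.sqrt (m + 1)) *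
        (Nat.choose ⌊ℓ - 1/2 + m⌋₊ ⌊2 * m⌋₊ : ℝ) := by
  refine ⟨2 / √π, by positivity, ?_⟩
  rintro ℓ m ⟨⟨n, rfl⟩, ⟨j, hj⟩⟩ x hx
  obtain rfl : ℓ = n / 2 + j + 1 / 2 := by linarith
  have htop : ⌊(n : ℝ) / 2 + j + 1 / 2 - 1 / 2 + n / 2⌋₊ = j + n := by
    rw [show (n : ℝ) / 2 + j + 1 / 2 - 1 / 2 + n / 2 = ((j + n : ℕ) : ℝ) by push_cast; ring,
      Nat.floor_natCast]
  have hbot : ⌊2 * ((n : ℝ) / 2)⌋₊ = n := by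
    rw [mul_div_cancel₀ _ two_ne_zero, Nat.floor_natCast]
  have hw : 0 ≤ 1 - x ^ 2 := by nlinarith [hx.1, hx.2]
  have hP := sq_jacobiP_le j (α := n / 2) (by linarith [show (0 : ℝ) ≤ n / 2 by positivity]) hx
  rw [sq_Yfun n j hw, htop, hbot]
  calc (1 - x ^ 2) ^ ((n : ℝ) / 2) *
        (cConst (n / 2 + j + 1 / 2) (n / 2) ^ 2 * jacobiP j (n / 2) x ^ 2)
      ≤ (1 - x ^ 2) ^ ((n : ℝ) / 2) *
          (cConst (n / 2 + j + 1 / 2) (n / 2) ^ 2 * Ring.choose ((n : ℝ) / 2 + j) j ^ 2) := by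
        gcongr
    _ ≤ (1 - x ^ 2) ^ ((n : ℝ) / 2) *
          (2 / √π * ((n / 2 + j + 1 / 2) / √(n / 2 + 1)) * (j + n).choose n) :=
        mul_le_mul_of_nonneg_left (cConst_sq_mul_choose_sq_le n j) (rpow_nonneg hw _)
    _ = _ := by ring
end

section
/- For all (ℓ,m) ∈ I with m > 1, all η, δ ∈ (0,1), and all x, x* ∈ (0,1) satisfying x* ≥ (1−η²)^{−1/2} x̄_{ℓ,m}, x > x*, and x² ≥ (1−δ)^{−1} x*², where x̄_{ℓ,m} = ((ℓ²−m²+3/4)/(ℓ²−1/4))^{1/2}, one has |Y_{ℓ,m}(x)| ≤ |Y_{ℓ,m}(x*)| · (1−x²)^{δ(η(ℓ²−1/4)^{1/2} − 1)/2}. -/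
open Real Set

/-- The turning point `x̄_{ℓ,m}`. -/
noncomputable def xbar (ℓ m : ℝ) : ℝ :=
  Real.sqrt ((ℓ ^ 2 - m ^ 2 + 3/4) / (ℓ ^ 2 - 1/4))

/-!
On `(-1, 1)` write `Y_{ℓ,m}(t) = κ (1 - t²)^{m/2} P(t)`, where `P` is a multiple of
`P_j^{(m,m)}`, `j = ℓ - m - 1/2`, and solves the Gegenbauer equation
`(1 - t²) P'' - 2 (m + 1) t P' + j (j + 2m + 1) P = 0`.
For a real `γ`, the weighted square `W = (1 - t²)^{m-γ} P²` has
`W' = 2 (1 - t²)^{m-γ-1} H` with `H = (γ - m) t P² + (1 - t²) P P'`.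
By the equation, `(1 - t²)^{1-m} ((1 - t²)^m H)'` is a quadratic form in `P` and
`-m t P + (1 - t²) P'`, positive semidefinite wherever
`γ² t² + (ℓ² - 1/4 - γ)(1 - t²) ≤ m²`. As `(1 - t²)^m H` vanishes at `t = 1`, on such an
interval `[a, 1)` we get `H ≤ 0`, so `W` decreases.
With `γ = max (η (ℓ² - 1/4)^{1/2} - 1) 0` the hypothesis on `x*` gives the condition on
`[x*, 1)`, whence `Y(x)² ≤ Y(x*)² ((1 - x²)/(1 - x*²))^γ`, and Bernoulli's inequality
`(1 - x²)^{1-δ} ≤ 1 - x*²` bounds the last factor by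
`(1 - x²)^{δ (η (ℓ² - 1/4)^{1/2} - 1)}`.
-/

open Polynomial
open scoped Topology Nat

noncomputable def rodriguesPoly (β : ℝ) : ℕ → ℝ[X]
  | 0 => 1
  | k + 1 => C (-2 * (β - k)) * X * rodriguesPoly β k
      + (1 - X ^ 2) * derivative (rodriguesPoly β k)

theorem derivative_rodriguesPoly_succ (β : ℝ) (k : ℕ) :
    derivative (rodriguesPoly β (k + 1))
      = C (-((k + 1) * (2 * β - k))) * rodriguesPoly β k := by
  induction k with
  | zero => simp [rodriguesPoly]
  | succ k ih =>
    have ih' := congrArg derivative ih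
    have hk : rodriguesPoly β (k + 1) = C (-2 * (β - k)) * X * rodriguesPoly β k
        + (1 - X ^ 2) * derivative (rodriguesPoly β k) := rfl
    rw [rodriguesPoly]
    simp only [derivative_add, derivative_mul, derivative_C, derivative_X, derivative_sub,
      derivative_one, derivative_X_pow, zero_mul, zero_add, mul_one, zero_sub] at ih' ⊢
    push_cast at ih ih' hk ⊢
    simp only [map_mul, map_sub, map_neg, map_add, map_natCast, map_ofNat, map_one] at ih ih' hk ⊢
    linear_combination (-2 * (C β - k - 1) * X - 2 * X) * ih + (1 - X ^ 2) * ih'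
      + (k + 1) * (2 * C β - k) * hk

theorem rodriguesPoly_ode (α : ℝ) (j : ℕ) :
    (1 - X ^ 2) * derivative (derivative (rodriguesPoly (α + j) j))
      - C (2 * (α + 1)) * X * derivative (rodriguesPoly (α + j) j)
      + C (j * (j + 2 * α + 1)) * rodriguesPoly (α + j) j = 0 := by
  have h := derivative_rodriguesPoly_succ (α + j) j
  rw [rodriguesPoly] at h
  simp only [derivative_add, derivative_mul, derivative_C, derivative_X, derivative_sub,
    derivative_one, derivative_X_pow, zero_mul, zero_add, mul_one, zero_sub] at h
  push_cast at h ⊢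
  simp only [map_mul, map_sub, map_neg, map_add, map_natCast, map_ofNat, map_one] at h ⊢
  linear_combination h

theorem one_sub_sq_pos_of_mem_Ioo {t : ℝ} (ht : t ∈ Ioo (-1 : ℝ) 1) : 0 < 1 - t ^ 2 := by
  nlinarith [ht.1, ht.2]

theorem hasDerivAt_one_sub_sq_rpow_mul {f : ℝ → ℝ} {f' r t : ℝ} (ht : 1 - t ^ 2 ≠ 0)
    (hf : HasDerivAt f f' t) :
    HasDerivAt (fun u => (1 - u ^ 2) ^ r * f u)
      ((1 - t ^ 2) ^ (r - 1) * (-2 * r * t * f t + (1 - t ^ 2) * f')) t := by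
  have hsq : HasDerivAt (fun u : ℝ => 1 - u ^ 2) (-(2 * t)) t := by
    simpa using (hasDerivAt_pow 2 t).const_sub 1
  refine ((hsq.rpow_const (p := r) (Or.inl ht)).mul hf).congr_deriv ?_
  rw [Real.rpow_sub_one ht]
  field_simp

theorem iteratedDeriv_one_sub_sq_rpow_s15 (β : ℝ) (k : ℕ) {t : ℝ} (ht : t ∈ Ioo (-1 : ℝ) 1) :
    iteratedDeriv k (fun s => (1 - s ^ 2) ^ β) t
      = (1 - t ^ 2) ^ (β - k) * (rodriguesPoly β k).eval t := by
  induction k generalizing t with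
  | zero => simp [rodriguesPoly]
  | succ k ih =>
    have hev : iteratedDeriv k (fun s => (1 - s ^ 2) ^ β)
        =ᶠ[𝓝 t] fun s => (1 - s ^ 2) ^ (β - k) * (rodriguesPoly β k).eval s :=
      Filter.eventually_of_mem (isOpen_Ioo.mem_nhds ht) fun s hs => ih hs
    rw [iteratedDeriv_succ, hev.deriv_eq,
      (hasDerivAt_one_sub_sq_rpow_mul (one_sub_sq_pos_of_mem_Ioo ht).ne'
        ((rodriguesPoly β k).hasDerivAt t)).deriv, rodriguesPoly]
    push_cast
    simp only [eval_add, eval_mul, eval_C, eval_X, eval_sub, eval_one, eval_pow]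
    ring_nf

theorem jacobiP_eq_eval (j : ℕ) (α : ℝ) {x : ℝ} (hx : x ∈ Ioo (-1 : ℝ) 1) :
    jacobiP j α x = (-1) ^ j / (2 ^ j * j !) * (rodriguesPoly (α + j) j).eval x := by
  have hx2 := one_sub_sq_pos_of_mem_Ioo hx
  rw [jacobiP, iteratedDeriv_one_sub_sq_rpow_s15 _ _ hx, add_sub_cancel_right,
    Real.rpow_neg hx2.le]
  field_simp

theorem Yfun_eq_eval {ℓ m : ℝ} {j : ℕ} (hj : ℓ - m - 1 / 2 = j) {t : ℝ}
    (ht : t ∈ Ioo (-1 : ℝ) 1) :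
    Yfun ℓ m t = cConst ℓ m * ((-1) ^ j / (2 ^ j * j !)) * (1 - t ^ 2) ^ (m / 2)
      * (rodriguesPoly (m + j) j).eval t := by
  rw [Yfun, hj, Nat.floor_natCast, jacobiP_eq_eval j m ht]
  ring

noncomputable def flux (m γ : ℝ) (P : ℝ[X]) : ℝ[X] :=
  C (γ - m) * X * P ^ 2 + (1 - X ^ 2) * P * derivative P

section GegenbauerEquation

variable {P : ℝ[X]} {m Λ γ : ℝ}

theorem flux_growth_nonneg
    (hP : (1 - X ^ 2) * derivative (derivative P) - C (2 * (m + 1)) * X * derivative P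
      + C Λ * P = 0)
    {t : ℝ} (ht : γ ^ 2 * t ^ 2 + (Λ + m * (m + 1) - γ) * (1 - t ^ 2) ≤ m ^ 2) :
    0 ≤ -2 * m * t * (flux m γ P).eval t + (1 - t ^ 2) * (derivative (flux m γ P)).eval t := by
  have hode := congrArg (eval t) hP
  simp only [eval_add, eval_sub, eval_mul, eval_C, eval_X, eval_pow, eval_one,
    eval_zero] at hode
  set p := P.eval t
  set v := -m * t * p + (1 - t ^ 2) * (derivative P).eval t
  have key : -2 * m * t * (flux m γ P).eval t + (1 - t ^ 2) * (derivative (flux m γ P)).eval t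
      = (m ^ 2 - (Λ + m * (m + 1) - γ) * (1 - t ^ 2) - γ ^ 2 * t ^ 2) * p ^ 2
        + (γ * t * p + v) ^ 2 := by
    simp only [flux, derivative_add, derivative_mul, derivative_C, derivative_X, derivative_sub,
      derivative_one, derivative_pow, eval_add, eval_sub, eval_mul, eval_C, eval_X, eval_pow,
      eval_one, eval_zero]
    linear_combination (1 - t ^ 2) * p * hode
  rw [key]
  have : 0 ≤ m ^ 2 - (Λ + m * (m + 1) - γ) * (1 - t ^ 2) - γ ^ 2 * t ^ 2 := by linarith
  positivity

theorem flux_eval_nonpos (hm : 0 < m)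
    (hP : (1 - X ^ 2) * derivative (derivative P) - C (2 * (m + 1)) * X * derivative P
      + C Λ * P = 0)
    {a : ℝ} (ha : -1 < a)
    (hcond : ∀ t ∈ Ioo a 1, γ ^ 2 * t ^ 2 + (Λ + m * (m + 1) - γ) * (1 - t ^ 2) ≤ m ^ 2)
    {t : ℝ} (ht : t ∈ Ico a 1) : (flux m γ P).eval t ≤ 0 := by
  have hmono : MonotoneOn (fun u => (1 - u ^ 2) ^ m * (flux m γ P).eval u) (Icc a 1) := by
    refine monotoneOn_of_hasDerivWithinAt_nonneg (convex_Icc a 1)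
      (f' := fun u => (1 - u ^ 2) ^ (m - 1) * (-2 * m * u * (flux m γ P).eval u
        + (1 - u ^ 2) * (derivative (flux m γ P)).eval u))
      ((continuousOn_const.sub (continuous_pow 2).continuousOn).rpow_const
        (fun _ _ => Or.inr hm.le) |>.mul (flux m γ P).continuousOn) (fun u hu => ?_)
      (fun u hu => ?_)
    all_goals rw [interior_Icc] at hu
    · exact (hasDerivAt_one_sub_sq_rpow_mul
        (one_sub_sq_pos_of_mem_Ioo ⟨ha.trans hu.1, hu.2⟩).ne'
        ((flux m γ P).hasDerivAt u)).hasDerivWithinAt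
    · have hu2 := one_sub_sq_pos_of_mem_Ioo ⟨ha.trans hu.1, hu.2⟩
      have := flux_growth_nonneg hP (hcond u hu)
      positivity
  have hG := hmono (Ico_subset_Icc_self ht) (right_mem_Icc.2 (ht.1.trans ht.2.le)) ht.2.le
  simp only [sub_self, one_pow, Real.zero_rpow hm.ne', zero_mul] at hG
  exact nonpos_of_mul_nonpos_right hG
    (Real.rpow_pos_of_pos (one_sub_sq_pos_of_mem_Ioo ⟨ha.trans_le ht.1, ht.2⟩) m)


theorem antitoneOn_one_sub_sq_rpow_mul_sq (hm : 0 < m)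
    (hP : (1 - X ^ 2) * derivative (derivative P) - C (2 * (m + 1)) * X * derivative P
      + C Λ * P = 0)
    {a : ℝ} (ha : -1 < a)
    (hcond : ∀ t ∈ Ioo a 1, γ ^ 2 * t ^ 2 + (Λ + m * (m + 1) - γ) * (1 - t ^ 2) ≤ m ^ 2) :
    AntitoneOn (fun t => (1 - t ^ 2) ^ (m - γ) * P.eval t ^ 2) (Ico a 1) := by
  have hderiv : ∀ t ∈ Ico a 1, HasDerivAt (fun t => (1 - t ^ 2) ^ (m - γ) * P.eval t ^ 2)
      ((1 - t ^ 2) ^ (m - γ - 1) * (2 * (flux m γ P).eval t)) t := by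
    intro t ht
    have hsq : HasDerivAt (fun u => P.eval u ^ 2) (2 * P.eval t * (derivative P).eval t) t :=
      ((P.hasDerivAt t).fun_pow 2).congr_deriv (by norm_num)
    refine (hasDerivAt_one_sub_sq_rpow_mul
      (one_sub_sq_pos_of_mem_Ioo ⟨ha.trans_le ht.1, ht.2⟩).ne' hsq).congr_deriv ?_
    simp only [flux, eval_add, eval_sub, eval_mul, eval_C, eval_X, eval_pow, eval_one]
    ring
  refine antitoneOn_of_hasDerivWithinAt_nonpos (convex_Ico a 1)
    (f' := fun t => (1 - t ^ 2) ^ (m - γ - 1) * (2 * (flux m γ P).eval t))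
    (fun t ht => (hderiv t ht).continuousAt.continuousWithinAt) (fun t ht => ?_) (fun t ht => ?_)
  all_goals rw [interior_Ico] at ht
  · exact (hderiv t (Ioo_subset_Ico_self ht)).hasDerivWithinAt
  · have ht2 := one_sub_sq_pos_of_mem_Ioo ⟨ha.trans ht.1, ht.2⟩
    have := flux_eval_nonpos hm hP ha hcond (Ioo_subset_Ico_self ht)
    exact mul_nonpos_of_nonneg_of_nonpos (by positivity) (by linarith)

end GegenbauerEquation

theorem mul_one_sub_le_of_xbar_le {ℓ m η y t : ℝ} (hℓ : 1 / 4 < ℓ ^ 2) (hη : η ^ 2 < 1)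
    (h : (1 - η ^ 2) ^ (-(1 / 2) : ℝ) * xbar ℓ m ≤ y) (hyt : y ≤ t) :
    (ℓ ^ 2 - 1 / 4) * (1 - (1 - η ^ 2) * t ^ 2) ≤ m ^ 2 - 1 := by
  have hlam : 0 < ℓ ^ 2 - 1 / 4 := by linarith
  have hA : 0 < 1 - η ^ 2 := by linarith
  have hsqrtA : 0 < √(1 - η ^ 2) := Real.sqrt_pos.2 hA
  rw [Real.rpow_neg hA.le, ← Real.sqrt_eq_rpow, inv_mul_le_iff₀ hsqrtA] at h
  have hxbar : 0 ≤ xbar ℓ m := Real.sqrt_nonneg _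
  have hy : 0 ≤ y := nonneg_of_mul_nonneg_right (hxbar.trans h) hsqrtA
  have hsq : xbar ℓ m ^ 2 ≤ (1 - η ^ 2) * t ^ 2 := by
    calc xbar ℓ m ^ 2 ≤ (√(1 - η ^ 2) * y) ^ 2 := pow_le_pow_left₀ hxbar h 2
      _ = (1 - η ^ 2) * y ^ 2 := by rw [mul_pow, Real.sq_sqrt hA.le]
      _ ≤ (1 - η ^ 2) * t ^ 2 := by gcongr
  have hbar : (ℓ ^ 2 - m ^ 2 + 3 / 4) / (ℓ ^ 2 - 1 / 4) ≤ xbar ℓ m ^ 2 := by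
    rw [xbar, Real.sq_sqrt']
    exact le_max_left _ _
  rw [div_le_iff₀ hlam] at hbar
  nlinarith

theorem max_sq_mul_add_le {c η lam m t : ℝ} (hlam : 0 ≤ lam) (hc : c + 1 = η * √lam)
    (ht : lam * (1 - (1 - η ^ 2) * t ^ 2) ≤ m ^ 2 - 1) :
    max c 0 ^ 2 * t ^ 2 + (lam - max c 0) * (1 - t ^ 2) ≤ m ^ 2 := by
  have hγ : max c 0 * (max c 0 + 1) ≤ η ^ 2 * lam := by
    rw [← Real.sq_sqrt hlam, ← mul_pow, ← hc]
    rcases le_total c 0 with hc0 | hc0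
    · rw [max_eq_right hc0, zero_mul]; positivity
    · rw [max_eq_left hc0]; nlinarith
  nlinarith [mul_le_mul_of_nonneg_right hγ (sq_nonneg t), le_max_right c 0]

theorem one_sub_sq_rpow_max_div_le {x y δ : ℝ} (c : ℝ) (hx : x ^ 2 < 1) (hδ0 : 0 ≤ δ)
    (hδ1 : δ ≤ 1) (hy : y ^ 2 ≤ (1 - δ) * x ^ 2) :
    (1 - x ^ 2) ^ max c 0 / (1 - y ^ 2) ^ max c 0 ≤ (1 - x ^ 2) ^ (δ * c) := by
  have hu : 0 < 1 - x ^ 2 := by linarith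
  rcases le_total c 0 with hc | hc
  · rw [max_eq_right hc, Real.rpow_zero, Real.rpow_zero, div_one]
    exact Real.one_le_rpow_of_pos_of_le_one_of_nonpos hu (by linarith [sq_nonneg x])
      (mul_nonpos_of_nonneg_of_nonpos hδ0 hc)
  · have hv : 0 < 1 - y ^ 2 := by nlinarith [sq_nonneg x]
    have hbern : (1 - x ^ 2) ^ (1 - δ) ≤ 1 - y ^ 2 := by
      have := rpow_one_add_le_one_add_mul_self (s := -x ^ 2) (p := 1 - δ) (by linarith)
        (by linarith) (by linarith)
      rw [← sub_eq_add_neg] at this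
      linarith
    rw [max_eq_left hc, div_le_iff₀ (Real.rpow_pos_of_pos hv c)]
    calc (1 - x ^ 2) ^ c = (1 - x ^ 2) ^ (δ * c) * ((1 - x ^ 2) ^ (1 - δ)) ^ c := by
          rw [← Real.rpow_mul hu.le, ← Real.rpow_add hu]; ring_nf
      _ ≤ (1 - x ^ 2) ^ (δ * c) * (1 - y ^ 2) ^ c := by gcongr

theorem abs_mul_rpow_half_le {κ u v p q m γ e : ℝ} (hu : 0 < u) (hv : 0 < v)
    (hW : u ^ (m - γ) * p ^ 2 ≤ v ^ (m - γ) * q ^ 2) (hT : u ^ γ / v ^ γ ≤ u ^ e) :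
    |κ * u ^ (m / 2) * p| ≤ |κ * v ^ (m / 2) * q| * u ^ (e / 2) := by
  have hhalf : ∀ {w : ℝ} (r : ℝ), 0 < w → (w ^ (r / 2)) ^ 2 = w ^ r := fun r hw => by
    rw [← Real.rpow_natCast, ← Real.rpow_mul hw.le]; norm_num
  have hsplit : ∀ {w : ℝ}, 0 < w → w ^ m = w ^ γ * w ^ (m - γ) := fun hw => by
    rw [← Real.rpow_add hw]; ring_nf
  rw [← pow_le_pow_iff_left₀ (abs_nonneg _) (by positivity) two_ne_zero, mul_pow, sq_abs,
    sq_abs, hhalf e hu]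
  calc (κ * u ^ (m / 2) * p) ^ 2 = κ ^ 2 * u ^ γ * (u ^ (m - γ) * p ^ 2) := by
        rw [mul_pow, mul_pow, hhalf m hu, hsplit hu]; ring
    _ ≤ κ ^ 2 * u ^ γ * (v ^ (m - γ) * q ^ 2) := by gcongr
    _ = (κ * v ^ (m / 2) * q) ^ 2 * (u ^ γ / v ^ γ) := by
        rw [mul_pow, mul_pow, hhalf m hv, hsplit hv]
        field_simp
    _ ≤ (κ * v ^ (m / 2) * q) ^ 2 * u ^ e := by gcongr

theorem stmt15 (ℓ m : ℝ) (hI : memI ℓ m) (hm : 1 < m) (η δ : ℝ)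
    (hη : η ∈ Set.Ioo (0:ℝ) 1) (hδ : δ ∈ Set.Ioo (0:ℝ) 1)
    (x xs : ℝ) (hx : x ∈ Set.Ioo (0:ℝ) 1) (hxs : xs ∈ Set.Ioo (0:ℝ) 1)
    (h1 : (1 - η ^ 2) ^ (-(1/2) : ℝ) * xbar ℓ m ≤ xs) (h2 : xs < x)
    (h3 : (1 - δ)⁻¹ * xs ^ 2 ≤ x ^ 2) :
    |Yfun ℓ m x| ≤ |Yfun ℓ m xs| *
      (1 - x ^ 2) ^ (δ * (η * Real.sqrt (ℓ ^ 2 - 1/4) - 1) / 2) := by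
  obtain ⟨-, j, hj⟩ := hI
  have hx' : x ∈ Ioo (-1 : ℝ) 1 := ⟨by linarith [hx.1], hx.2⟩
  have hxs' : xs ∈ Ioo (-1 : ℝ) 1 := ⟨by linarith [hxs.1], hxs.2⟩
  have hlam : ℓ ^ 2 - 1 / 4 = j * (j + 2 * m + 1) + m * (m + 1) := by
    rw [show ℓ = m + 1 / 2 + j by linarith]; ring
  have hlam_pos : 0 < ℓ ^ 2 - 1 / 4 := by rw [hlam]; positivity
  set c := η * √(ℓ ^ 2 - 1 / 4) - 1
  have hcond (t : ℝ) (ht : t ∈ Ioo xs 1) : max c 0 ^ 2 * t ^ 2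
      + ((j * (j + 2 * m + 1) : ℝ) + m * (m + 1) - max c 0) * (1 - t ^ 2) ≤ m ^ 2 := by
    rw [← hlam]
    exact max_sq_mul_add_le hlam_pos.le (by ring)
      (mul_one_sub_le_of_xbar_le (by linarith) (by nlinarith [hη.1, hη.2]) h1 ht.1.le)
  have hW := antitoneOn_one_sub_sq_rpow_mul_sq (by linarith) (rodriguesPoly_ode m j) hxs'.1 hcond
    ⟨le_rfl, hxs.2⟩ ⟨h2.le, hx.2⟩ h2.le
  have hxs_x : xs ^ 2 ≤ (1 - δ) * x ^ 2 := (inv_mul_le_iff₀ (sub_pos.2 hδ.2)).1 h3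
  have hx1 : x ^ 2 < 1 := by linarith [one_sub_sq_pos_of_mem_Ioo hx']
  rw [Yfun_eq_eval hj hx', Yfun_eq_eval hj hxs']
  exact abs_mul_rpow_half_le (one_sub_sq_pos_of_mem_Ioo hx') (one_sub_sq_pos_of_mem_Ioo hxs') hW
    (one_sub_sq_rpow_max_div_le c hx1 hδ.1.le hδ.2.le hxs_x)
end
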